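/- Existence, uniqueness and triangularity of the re-expansion map (Lemma 7.1): Let {π⁽ⁿ⁾}_{n ∈ ℕ²} ⊂ ℝ[[z_k,z_n]] (the index n ranging over all of ℕ², including n = (0,0)) satisfy the population condition π⁽ⁿ⁾_β = 0 unless |n| < |β|. Then there exists a unique matrix of real numbers ((Γ*)_β^γ), indexed by pairs of multi-indices, such that: (i) for each β, the set {γ : (Γ*)_β^γ ≠ 0} is finite; (ii) the induced linear map (Γ*π)_β := Σ_γ (Γ*)_β^γ π_γ is a unital algebra endomorphism of ℝ[[z_k,z_n]]; (iii) Γ* z_k = Σ_{l≥0} (k+l choose k) (π⁽⁰⁾)^l z_{k+l} for all k ∈ ℕ; and (iv) Γ* z_n = z_n + π⁽ⁿ⁾ for all n ≠ (0,0). Moreover this matrix is strictly triangular: (Γ*)_β^γ = δ_β^γ unless both |γ| < |β| and γ ≺ β. -/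

import Mathlib

/-! The re-expansion map is forced to be the substitution `z_i ↦ g_i` of the prescribed
images `g_i` of the coordinates, so its matrix entry `(Γ*)_β^γ` is the `β`-coefficient of
`∏ g_i ^ γ(i)`; existence and the algebra properties are those of `MvPowerSeries.subst`.

Both `|·| - α` and `|·|_≺ - α` are additive weights of multi-indices that are nonnegative on
the variables. With respect to each of them every `g_i` is `z_i` plus terms of strictly larger
weight: for `z_n + π⁽ⁿ⁾` this is the population condition, for `Γ* z_k` it holds because every
term with `l ≥ 1` contains `z_{k+l}`, which is heavier than `z_k` (for `k = 0` this needs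
`λ < α`). This shape is stable under products, so `∏ g_i ^ γ(i) = z^γ + (heavier terms)`, which
is the triangularity. -/

open MvPowerSeries

noncomputable section

/-- Indices `n ∈ ℕ² \ {(0,0)}` for the variables `z_n`. -/
abbrev Pos2 : Type := {p : ℕ × ℕ // p ≠ (0, 0)}

/-- The variables: `z_k` for `k ∈ ℕ` (left) and `z_n` for `n ∈ ℕ²\{0}` (right). -/
abbrev Var : Type := ℕ ⊕ Pos2

/-- Multi-indices: finitely supported functions from the variables to ℕ. -/
abbrev MIdx : Type := Var →₀ ℕ

/-- The algebra ℝ[[z_k, z_n]] of formal power series. -/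
abbrev FPS : Type := MvPowerSeries Var ℝ

/-- The variable `z_k` as a power series. -/
def zk (k : ℕ) : FPS := MvPowerSeries.X (Sum.inl k)

/-- The variable `z_n` as a power series. -/
def zn (n : Pos2) : FPS := MvPowerSeries.X (Sum.inr n)

/-- The derivation `D⁽⁰⁾ = Σ_k (k+1) z_{k+1} ∂_{z_k}`, defined componentwise by
`(D⁽⁰⁾π)_β = Σ_{k, β(k+1) ≥ 1} (k+1)(β(k)+1) π_{β + e_k - e_{k+1}}`. -/
def Dzero (π : FPS) : FPS := fun β =>
  ∑ j ∈ β.support,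
    (match j with
     | Sum.inl (k + 1) =>
         ((k : ℝ) + 1) * ((β (Sum.inl k) : ℝ) + 1) *
           MvPowerSeries.coeff
             (β + Finsupp.single (Sum.inl k) 1 - Finsupp.single (Sum.inl (k + 1)) 1) π
     | _ => 0)

/-- `c ∈ ℝ[[z_k]]`: the subalgebra of series with no `z_n`-dependence. -/
def OnlyZk (c : FPS) : Prop :=
  ∀ β : MIdx, (∃ n : Pos2, β (Sum.inr n) ≠ 0) → MvPowerSeries.coeff β c = 0

/-- `[β] := Σ_k k β(k) − Σ_n β(n)`. -/
def bracketZ (β : MIdx) : ℤ :=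
  β.sum fun j m => (match j with | Sum.inl k => (k : ℤ) | Sum.inr _ => -1) * (m : ℤ)

/-- `|β|_p := Σ_n |n| β(n)` where `|n| = n₁ + 2 n₂`. -/
def homP (β : MIdx) : ℝ :=
  β.sum fun j m =>
    (match j with | Sum.inl _ => (0 : ℝ) | Sum.inr n => (n.val.1 : ℝ) + 2 * n.val.2) * (m : ℝ)

/-- The homogeneity `|β| := α (1 + [β]) + |β|_p`. -/
def hom (α : ℝ) (β : MIdx) : ℝ := α * (1 + (bracketZ β : ℝ)) + homP β

/-- `|β|_≺ := |β| + λ β(0)`; the ordering is `γ ≺ β iff |γ|_≺ < |β|_≺`. -/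
def ordP (α lam : ℝ) (β : MIdx) : ℝ := hom α β + lam * (β (Sum.inl 0) : ℝ)

/-- Row-finiteness of a matrix indexed by pairs of multi-indices. -/
def RowFinite (Γ : MIdx → MIdx → ℝ) : Prop := ∀ β : MIdx, {γ : MIdx | Γ β γ ≠ 0}.Finite

/-- The linear map induced componentwise by a (row-finite) matrix. -/
def applyG (Γ : MIdx → MIdx → ℝ) (π : FPS) : FPS := fun β =>
  ∑ᶠ γ : MIdx, Γ β γ * MvPowerSeries.coeff γ π

/-- The prescribed image of `z_k`: `Σ_{l≥0} (k+l choose k) q^l z_{k+l}`, defined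
componentwise (only finitely many `l` contribute to each component). -/
def gammaZk (q : FPS) (k : ℕ) : FPS := fun β =>
  ∑ᶠ l : ℕ, (((k + l).choose k : ℝ)) * MvPowerSeries.coeff β (q ^ l * zk (k + l))

/-- The population condition `π⁽ⁿ⁾_β = 0 unless |n| < |β|`. -/
def PopCond (α : ℝ) (pin : ℕ × ℕ → FPS) : Prop :=
  ∀ (n : ℕ × ℕ) (β : MIdx),
    MvPowerSeries.coeff β (pin n) ≠ 0 → ((n.1 : ℝ) + 2 * n.2) < hom α β

/-- `Γ` is the re-expansion matrix associated to the family `{π⁽ⁿ⁾}_{n ∈ ℕ²}`: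
row-finite, the induced map is a unital algebra endomorphism, and it maps the
coordinates `z_k`, `z_n` as prescribed. -/
def IsReExpansion (pin : ℕ × ℕ → FPS) (Γ : MIdx → MIdx → ℝ) : Prop :=
  RowFinite Γ ∧
  (∀ π π' : FPS, applyG Γ (π * π') = applyG Γ π * applyG Γ π') ∧
  applyG Γ 1 = 1 ∧
  (∀ k : ℕ, applyG Γ (zk k) = gammaZk (pin (0, 0)) k) ∧
  (∀ n : Pos2, applyG Γ (zn n) = zn n + pin n.val)


open Finsupp (weight)

section LeadTerm

variable {σ R : Type*} [CommSemiring R]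

def HasLeadTerm (w : σ → ℝ) (d : σ →₀ ℕ) (f : MvPowerSeries σ R) : Prop :=
  coeff d f = 1 ∧ ∀ e, coeff e f ≠ 0 → e ≠ d → weight w d < weight w e

variable {w : σ → ℝ}

namespace HasLeadTerm

theorem weight_le {d e : σ →₀ ℕ} {f : MvPowerSeries σ R} (hf : HasLeadTerm w d f)
    (he : coeff e f ≠ 0) : weight w d ≤ weight w e := by
  rcases eq_or_ne e d with rfl | hne
  · rfl
  · exact (hf.2 e he hne).le

theorem one : HasLeadTerm w 0 (1 : MvPowerSeries σ R) := by
  classical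
  exact ⟨by simp, fun e he hne => (he (by simp [coeff_one, hne])).elim⟩

theorem mul {d d' : σ →₀ ℕ} {f g : MvPowerSeries σ R} (hf : HasLeadTerm w d f)
    (hg : HasLeadTerm w d' g) : HasLeadTerm w (d + d') (f * g) := by
  classical
  have off_lead : ∀ p : (σ →₀ ℕ) × (σ →₀ ℕ), coeff p.1 f * coeff p.2 g ≠ 0 → p ≠ (d, d') →
      weight w (d + d') < weight w (p.1 + p.2) := by
    rintro ⟨a, b⟩ hab hne
    have ha := left_ne_zero_of_mul hab
    have hb := right_ne_zero_of_mul hab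
    rw [map_add, map_add]
    rcases eq_or_ne a d with rfl | had
    · exact add_lt_add_of_le_of_lt le_rfl (hg.2 b hb fun h => hne (by rw [h]))
    · exact add_lt_add_of_lt_of_le (hf.2 a ha had) (hg.weight_le hb)
  refine ⟨?_, fun e he hne => ?_⟩
  · rw [coeff_mul, Finset.sum_eq_single (d, d'), hf.1, hg.1, one_mul]
    · intro p hp hne
      by_contra h
      rw [Finset.HasAntidiagonal.mem_antidiagonal] at hp
      exact (off_lead p h hne).ne (by rw [hp])
    · simp
  · rw [coeff_mul] at he
    obtain ⟨p, hp, hp0⟩ := Finset.exists_ne_zero_of_sum_ne_zero he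
    rw [Finset.HasAntidiagonal.mem_antidiagonal] at hp
    rw [← hp]
    exact off_lead p hp0 fun h => hne (by rw [← hp, h])

theorem pow {d : σ →₀ ℕ} {f : MvPowerSeries σ R} (hf : HasLeadTerm w d f) (n : ℕ) :
    HasLeadTerm w (n • d) (f ^ n) := by
  induction n with
  | zero => simpa using one
  | succ n ih => simpa [succ_nsmul, pow_succ] using ih.mul hf

theorem prod {ι : Type*} {s : Finset ι} {d : ι → σ →₀ ℕ} {f : ι → MvPowerSeries σ R}
    (h : ∀ i ∈ s, HasLeadTerm w (d i) (f i)) :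
    HasLeadTerm w (∑ i ∈ s, d i) (∏ i ∈ s, f i) := by
  classical
  induction s using Finset.induction_on with
  | empty => simpa using one
  | insert i s hi ih =>
    rw [Finset.sum_insert hi, Finset.prod_insert hi]
    exact (h i (Finset.mem_insert_self i s)).mul
      (ih fun j hj => h j (Finset.mem_insert_of_mem hj))

end HasLeadTerm

theorem hasLeadTerm_finsuppProd {g : σ → MvPowerSeries σ R}
    (hg : ∀ i, HasLeadTerm w (Finsupp.single i 1) (g i)) (γ : σ →₀ ℕ) :
    HasLeadTerm w γ (γ.prod fun i m => g i ^ m) := by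
  have h := HasLeadTerm.prod (s := γ.support) fun i _ => (hg i).pow (γ i)
  simp only [Finsupp.smul_single_one] at h
  rwa [← Finsupp.sum, Finsupp.sum_single] at h

theorem hasLeadTerm_X_add {i : σ} {p : MvPowerSeries σ R}
    (hp : ∀ e, coeff e p ≠ 0 → w i < weight w e) :
    HasLeadTerm w (Finsupp.single i 1) (X i + p) := by
  classical
  have hp_lead : coeff (Finsupp.single i 1) p = 0 := by
    by_contra h
    simpa [Finsupp.weight_single] using hp _ h
  refine ⟨by simp [coeff_X, hp_lead], fun e he hne => ?_⟩
  rw [map_add, coeff_X, if_neg hne, zero_add] at he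
  simpa [Finsupp.weight_single] using hp e he

theorem le_weight_of_coeff_mul_X_ne_zero (hw : ∀ i, 0 ≤ w i) {f : MvPowerSeries σ R} {i : σ}
    {e : σ →₀ ℕ} (h : coeff e (f * X i) ≠ 0) : w i ≤ weight w e := by
  rw [X, coeff_mul_monomial] at h
  split_ifs at h with hle
  · exact Finsupp.le_weight_of_ne_zero hw
      (Nat.one_le_iff_ne_zero.mp (Finsupp.single_le_iff.mp hle))
  · exact (h rfl).elim

theorem hasSubst_of_hasLeadTerm {S : Type*} [CommRing S] {g : σ → MvPowerSeries σ S}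
    (hw : ∀ i, 0 ≤ w i) (hfin : ∀ C, {i | w i ≤ C}.Finite)
    (hg : ∀ i, HasLeadTerm w (Finsupp.single i 1) (g i)) : HasSubst g where
  const_coeff i := by
    suffices constantCoeff (g i) = 0 by rw [this]; exact IsNilpotent.zero
    by_contra h
    rw [← coeff_zero_eq_constantCoeff_apply] at h
    have := (hg i).2 0 h (Finsupp.single_ne_zero.mpr one_ne_zero).symm
    simp only [Finsupp.weight_single, one_smul, map_zero] at this
    linarith [hw i]
  coeff_zero e :=
    (hfin (weight w e)).subset fun i hi => by simpa [Finsupp.weight_single] using (hg i).weight_le hi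

end LeadTerm

section ReExpansion

def homWeight (α : ℝ) : Var → ℝ
  | Sum.inl k => α * k
  | Sum.inr n => (n.val.1 : ℝ) + 2 * n.val.2 - α

def ordWeight (α lam : ℝ) : Var → ℝ := homWeight α + Pi.single (Sum.inl 0) lam

theorem hom_eq_add_weight (α : ℝ) (β : MIdx) : hom α β = α + weight (homWeight α) β := by
  unfold hom bracketZ homP
  rw [Finsupp.weight_apply]
  unfold Finsupp.sum
  push_cast
  rw [mul_add, mul_one, Finset.mul_sum, add_assoc, ← Finset.sum_add_distrib]
  congr 1
  refine Finset.sum_congr rfl fun i _ => ?_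
  cases i <;> simp [homWeight] <;> ring

theorem weight_ordWeight (α lam : ℝ) (β : MIdx) :
    weight (ordWeight α lam) β = weight (homWeight α) β + β (Sum.inl 0) * lam := by
  classical
  rw [ordWeight, Finsupp.weight_apply, Finsupp.weight_apply, ← nsmul_eq_mul,
    ← Finsupp.weight_single_index, Finsupp.weight_apply, ← Finsupp.sum_add]
  simp only [Pi.add_apply, smul_add]

theorem ordP_eq_add_weight (α lam : ℝ) (β : MIdx) :
    ordP α lam β = α + weight (ordWeight α lam) β := by
  rw [ordP, hom_eq_add_weight, weight_ordWeight]
  ring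

theorem one_le_pos2 (n : Pos2) : (1 : ℝ) ≤ n.val.1 + 2 * n.val.2 := by
  obtain ⟨⟨a, b⟩, hn⟩ := n
  have : 1 ≤ a + 2 * b := by
    by_contra h
    exact hn (by ext <;> simp <;> omega)
  exact_mod_cast this

theorem homWeight_nonneg {α : ℝ} (hα0 : 0 ≤ α) (hα1 : α ≤ 1) : ∀ i, 0 ≤ homWeight α i
  | Sum.inl k => mul_nonneg hα0 k.cast_nonneg
  | Sum.inr n => by simp only [homWeight]; linarith [one_le_pos2 n]

theorem finite_setOf_homWeight_le {α : ℝ} (hα : 0 < α) (C : ℝ) :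
    {i | homWeight α i ≤ C}.Finite := by
  have hinl : {k : ℕ | α * k ≤ C}.Finite :=
    (Set.finite_Iic ⌈C / α⌉₊).subset fun k hk =>
      Nat.cast_le.mp ((le_div_iff₀' hα).mpr hk |>.trans (Nat.le_ceil _))
  have hinr : {n : Pos2 | (n.val.1 : ℝ) + 2 * n.val.2 - α ≤ C}.Finite := by
    refine ((Set.finite_Iic (⌈C + α⌉₊, ⌈C + α⌉₊)).preimage
      Subtype.val_injective.injOn).subset fun n (hn : _ ≤ C) => ?_
    have h1 : (n.val.1 : ℝ) ≤ C + α := by linarith [n.val.2.cast_nonneg (α := ℝ)]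
    have h2 : (n.val.2 : ℝ) ≤ C + α := by linarith [n.val.1.cast_nonneg (α := ℝ)]
    exact ⟨Nat.cast_le.mp (h1.trans (Nat.le_ceil _)), Nat.cast_le.mp (h2.trans (Nat.le_ceil _))⟩
  refine ((hinl.image Sum.inl).union (hinr.image Sum.inr)).subset ?_
  rintro (k | n) hi
  · exact Or.inl ⟨k, hi, rfl⟩
  · exact Or.inr ⟨n, hi, rfl⟩

theorem hasLeadTerm_gammaZk {w : Var → ℝ} (hw : ∀ i, 0 ≤ w i) (hmono : StrictMono (w ∘ Sum.inl))
    (q : FPS) (k : ℕ) : HasLeadTerm w (Finsupp.single (Sum.inl k) 1) (gammaZk q k) := by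
  classical
  have heavy : ∀ l ≠ 0, ∀ e : MIdx, coeff e (q ^ l * zk (k + l)) ≠ 0 →
      weight w (Finsupp.single (Sum.inl k) 1) < weight w e := fun l hl e he => by
    rw [Finsupp.weight_single, one_smul]
    exact (hmono (Nat.lt_add_of_pos_right (Nat.pos_of_ne_zero hl))).trans_le
      (le_weight_of_coeff_mul_X_ne_zero hw he)
  have hcoeff : ∀ e, coeff e (gammaZk q k) =
      ∑ᶠ l : ℕ, ((k + l).choose k : ℝ) * coeff e (q ^ l * zk (k + l)) := fun e => rfl
  refine ⟨?_, fun e he hne => ?_⟩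
  · rw [hcoeff, finsum_eq_single _ 0 fun l hl => ?_]
    · simp [zk, coeff_X]
    · by_contra h
      exact lt_irrefl _ (heavy l hl _ (right_ne_zero_of_mul h))
  · rw [hcoeff] at he
    obtain ⟨l, hl⟩ : ∃ l, ((k + l).choose k : ℝ) * coeff e (q ^ l * zk (k + l)) ≠ 0 := by
      by_contra! h
      exact he (finsum_eq_zero_of_forall_eq_zero h)
    rcases eq_or_ne l 0 with rfl | hl0
    · simp [zk, coeff_X, hne] at hl
    · exact heavy l hl0 e (right_ne_zero_of_mul hl)

def reExpGen (pin : ℕ × ℕ → FPS) : Var → FPS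
  | Sum.inl k => gammaZk (pin (0, 0)) k
  | Sum.inr n => zn n + pin n.val

def reExpMatrix (pin : ℕ × ℕ → FPS) (β γ : MIdx) : ℝ :=
  coeff β (γ.prod fun i m => reExpGen pin i ^ m)

structure IsAdaptedWeight (pin : ℕ × ℕ → FPS) (w : Var → ℝ) : Prop where
  nonneg : ∀ i, 0 ≤ w i
  strictMono_inl : StrictMono (w ∘ Sum.inl)
  lt_weight_of_coeff_ne_zero :
    ∀ (n : Pos2) (e : MIdx), coeff e (pin n.val) ≠ 0 → w (Sum.inr n) < weight w e

variable {α lam : ℝ} {pin : ℕ × ℕ → FPS}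

namespace IsAdaptedWeight

variable {w : Var → ℝ}

theorem hasLeadTerm_reExpGen (hw : IsAdaptedWeight pin w) :
    ∀ i, HasLeadTerm w (Finsupp.single i 1) (reExpGen pin i)
  | Sum.inl k => hasLeadTerm_gammaZk hw.nonneg hw.strictMono_inl _ k
  | Sum.inr n => hasLeadTerm_X_add (hw.lt_weight_of_coeff_ne_zero n)

theorem weight_lt_of_reExpMatrix_ne (hw : IsAdaptedWeight pin w) {β γ : MIdx}
    (h : reExpMatrix pin β γ ≠ if γ = β then 1 else 0) : weight w γ < weight w β := by
  have hlead := hasLeadTerm_finsuppProd hw.hasLeadTerm_reExpGen γ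
  by_cases hγβ : γ = β
  · subst hγβ
    exact (h (by rw [if_pos rfl]; exact hlead.1)).elim
  · rw [if_neg hγβ] at h
    exact hlead.2 β h (Ne.symm hγβ)

end IsAdaptedWeight

theorem isAdaptedWeight_homWeight (hα0 : 0 < α) (hα1 : α ≤ 1) (hpop : PopCond α pin) :
    IsAdaptedWeight pin (homWeight α) where
  nonneg := homWeight_nonneg hα0.le hα1
  strictMono_inl _ _ hkl := mul_lt_mul_of_pos_left (Nat.cast_lt.mpr hkl) hα0
  lt_weight_of_coeff_ne_zero n e he := by
    have := hpop n.val e he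
    rw [hom_eq_add_weight] at this
    simp only [homWeight]
    linarith

theorem isAdaptedWeight_ordWeight (hα0 : 0 < α) (hα1 : α ≤ 1) (hlam0 : 0 ≤ lam)
    (hlam : lam < α) (hpop : PopCond α pin) : IsAdaptedWeight pin (ordWeight α lam) where
  nonneg i := by
    classical
    refine add_nonneg (homWeight_nonneg hα0.le hα1 i) ?_
    rw [Pi.single_apply]
    split_ifs <;> simp [hlam0]
  strictMono_inl := strictMono_nat_of_lt_succ fun k => by
    rcases eq_or_ne k 0 with rfl | hk
    · simpa [ordWeight, homWeight] using hlam
    · simp [ordWeight, homWeight, hk]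
      linarith
  lt_weight_of_coeff_ne_zero n e he := by
    have := (isAdaptedWeight_homWeight hα0 hα1 hpop).lt_weight_of_coeff_ne_zero n e he
    rw [weight_ordWeight]
    simp only [ordWeight, Pi.add_apply, ne_eq, reduceCtorEq, not_false_eq_true,
      Pi.single_eq_of_ne, add_zero]
    linarith [mul_nonneg (e (Sum.inl 0)).cast_nonneg hlam0]

theorem hasSubst_reExpGen (hα : 0 < α) (hw : IsAdaptedWeight pin (homWeight α)) :
    HasSubst (reExpGen pin) :=
  hasSubst_of_hasLeadTerm hw.nonneg (finite_setOf_homWeight_le hα) hw.hasLeadTerm_reExpGen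

theorem applyG_reExpMatrix (hs : HasSubst (reExpGen pin)) :
    applyG (reExpMatrix pin) = subst (reExpGen pin) := by
  funext π
  ext β
  rw [coeff_subst hs]
  refine finsum_congr fun γ => ?_
  rw [smul_eq_mul, mul_comm]
  rfl

theorem isReExpansion_reExpMatrix (hs : HasSubst (reExpGen pin)) :
    IsReExpansion pin (reExpMatrix pin) := by
  refine ⟨fun β => ?_, ?_, ?_, fun k => ?_, fun n => ?_⟩
  · -- substituting into the series with all coefficients `1` sees every entry of row `β`
    have hone : ∀ d, coeff d (fun _ => 1 : FPS) = 1 := fun _ => rfl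
    simpa [Function.HasFiniteSupport, Function.support, hone, reExpMatrix] using
      coeff_subst_finite hs (fun _ => 1 : FPS) β
  all_goals rw [applyG_reExpMatrix hs]
  · exact subst_mul hs
  · rw [← coe_substAlgHom hs, map_one]
  · exact subst_X hs (Sum.inl k)
  · exact subst_X hs (Sum.inr n)

theorem coeff_applyG_monomial (Γ : MIdx → MIdx → ℝ) (β γ : MIdx) :
    coeff β (applyG Γ (monomial γ 1)) = Γ β γ := by
  classical
  change ∑ᶠ δ, Γ β δ * coeff δ (monomial γ (1 : ℝ)) = _
  rw [finsum_eq_single _ γ fun δ hδ => by simp [coeff_monomial, hδ]]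
  simp

theorem IsReExpansion.eq_reExpMatrix {Γ : MIdx → MIdx → ℝ} (h : IsReExpansion pin Γ) :
    Γ = reExpMatrix pin := by
  obtain ⟨-, hmul, hone, hzk, hzn⟩ := h
  let φ : FPS →* FPS := { toFun := applyG Γ, map_one' := hone, map_mul' := hmul }
  have hX : ∀ i, φ (X i) = reExpGen pin i
    | Sum.inl k => hzk k
    | Sum.inr n => hzn n
  funext β γ
  rw [← coeff_applyG_monomial Γ β γ, monomial_one_eq]
  change coeff β (φ _) = _
  simp only [map_finsuppProd, map_pow, hX]
  rfl

end ReExpansion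

/-- Existence, uniqueness and triangularity of the re-expansion map (Lemma 7.1):
given a family `{π⁽ⁿ⁾}_{n ∈ ℕ²}` satisfying the population condition, there is a
unique row-finite matrix inducing a unital algebra endomorphism of ℝ[[z_k,z_n]]
with the prescribed action on the coordinates; moreover it is strictly triangular:
`(Γ*)_β^γ = δ_β^γ` unless both `|γ| < |β|` and `γ ≺ β`. -/
theorem stmt_13 (α lam : ℝ) (hα0 : 0 < α) (hα1 : α < 1) (hlam0 : 0 < lam) (hlam : lam < α)
    (pin : ℕ × ℕ → FPS) (hpop : PopCond α pin) :
    ∃ Γ : MIdx → MIdx → ℝ,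
      (IsReExpansion pin Γ ∧
        ∀ β γ : MIdx, Γ β γ ≠ (if γ = β then 1 else 0) →
          hom α γ < hom α β ∧ ordP α lam γ < ordP α lam β) ∧
      ∀ Γ' : MIdx → MIdx → ℝ, IsReExpansion pin Γ' → Γ' = Γ := by
  have hhom := isAdaptedWeight_homWeight hα0 hα1.le hpop
  have hord := isAdaptedWeight_ordWeight hα0 hα1.le hlam0.le hlam hpop
  refine ⟨reExpMatrix pin, ⟨isReExpansion_reExpMatrix (hasSubst_reExpGen hα0 hhom),
    fun β γ h => ?_⟩, fun Γ' h => h.eq_reExpMatrix⟩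
  rw [hom_eq_add_weight, hom_eq_add_weight, ordP_eq_add_weight, ordP_eq_add_weight]
  exact ⟨add_lt_add_right (hhom.weight_lt_of_reExpMatrix_ne h) α,
    add_lt_add_right (hord.weight_lt_of_reExpMatrix_ne h) α⟩
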